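/- Let u : K → ℝ be bounded and Lipschitz with respect to δ_TV with Lipschitz constant γ(u), and suppose that for every x ∈ K the function a ↦ u(h(x,a))·‖xM_a‖ is τ-measurable and τ-integrable. Define Tu(x) = ∫_A u(h(x,a)) ‖xM_a‖ τ(da). Then Tu is Lipschitz with respect to δ_TV with Lipschitz constant at most 3γ(u), i.e. |Tu(x) − Tu(y)| ≤ 3γ(u) · δ_TV(x, y) for all x, y ∈ K. -/

import Mathlib

/-!
Since `δ_TV ≤ 2` on `K`, `u` oscillates by at most `2γ` on `K`, so `|u - c| ≤ γ` there for some
constant `c`. As `∫ ‖xM_a‖ τ(da) = 1 = ∫ ‖yM_a‖ τ(da)`, subtracting `c(‖xM_a‖ - ‖yM_a‖)` from the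
integrand of `Tu(x) - Tu(y)` changes nothing, and the new integrand is at most
`3γ δ_TV(xM_a, yM_a)` because `|‖μ‖ - ‖ν‖| ≤ δ_TV(μ, ν)` and
`‖ν‖ δ_TV(μ/‖μ‖, ν/‖ν‖) ≤ 2 δ_TV(μ, ν)`. Finally `∫ δ_TV(xM_a, yM_a) τ(da) ≤ δ_TV(x, y)`, since
`m(s,·,·)` has total mass one for every `s`.
-/

open MeasureTheory
open scoped NNReal ENNReal

/-- The total variation distance between two (finite) measures:
`δ_TV(z₁,z₂) = sup_F (z₁(F) − z₂(F)) + sup_F (z₂(F) − z₁(F))`, `F` measurable. -/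
noncomputable def tvDist {S : Type*} [MeasurableSpace S] (z₁ z₂ : Measure S) : ℝ :=
  sSup {d : ℝ | ∃ F : Set S, MeasurableSet F ∧ d = (z₁ F).toReal - (z₂ F).toReal} +
    sSup {d : ℝ | ∃ F : Set S, MeasurableSet F ∧ d = (z₂ F).toReal - (z₁ F).toReal}

/-- The measure `xM_a`, `xM_a(F) = ∫_S ∫_F m(s,t,a) λ(dt) x(ds)`. -/
noncomputable def xMa {S A : Type*} [MeasurableSpace S] [MeasurableSpace A]
    (lam : Measure S) (m : S → S → A → ℝ≥0) (x : Measure S) (a : A) : Measure S :=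
  x.bind fun s => lam.withDensity fun t => (m s t a : ℝ≥0∞)

/-- The map `h(x,a) = xM_a/‖xM_a‖` if `‖xM_a‖ > 0`, and `h(x,a) = x` otherwise. -/
noncomputable def hmap {S A : Type*} [MeasurableSpace S] [MeasurableSpace A]
    (lam : Measure S) (m : S → S → A → ℝ≥0) (x : Measure S) (a : A) : Measure S :=
  if 0 < xMa lam m x a Set.univ then (xMa lam m x a Set.univ)⁻¹ • xMa lam m x a else x

open Set

section TotalVariation

variable {S : Type*} [MeasurableSpace S]

noncomputable def posVariation (z₁ z₂ : Measure S) : ℝ :=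
  sSup {d : ℝ | ∃ F : Set S, MeasurableSet F ∧ d = (z₁ F).toReal - (z₂ F).toReal}

lemma tvDist_eq_posVariation_add (z₁ z₂ : Measure S) :
    tvDist z₁ z₂ = posVariation z₁ z₂ + posVariation z₂ z₁ := rfl

lemma toReal_measure_sub_le_posVariation (z₁ z₂ : Measure S) [IsFiniteMeasure z₁] {F : Set S}
    (hF : MeasurableSet F) : (z₁ F).toReal - (z₂ F).toReal ≤ posVariation z₁ z₂ := by
  refine le_csSup ⟨(z₁ univ).toReal, ?_⟩ ⟨F, hF, rfl⟩
  rintro _ ⟨G, -, rfl⟩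
  have := ENNReal.toReal_mono (measure_ne_top z₁ univ) (measure_mono (subset_univ G))
  linarith [ENNReal.toReal_nonneg (a := z₂ G)]

lemma posVariation_le {z₁ z₂ : Measure S} {b : ℝ}
    (h : ∀ F, MeasurableSet F → (z₁ F).toReal - (z₂ F).toReal ≤ b) : posVariation z₁ z₂ ≤ b :=
  csSup_le ⟨_, ∅, .empty, rfl⟩ (by rintro _ ⟨F, hF, rfl⟩; exact h F hF)

lemma posVariation_nonneg (z₁ z₂ : Measure S) [IsFiniteMeasure z₁] : 0 ≤ posVariation z₁ z₂ := by
  simpa using toReal_measure_sub_le_posVariation z₁ z₂ .empty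

lemma tvDist_nonneg (z₁ z₂ : Measure S) [IsFiniteMeasure z₁] [IsFiniteMeasure z₂] :
    0 ≤ tvDist z₁ z₂ :=
  add_nonneg (posVariation_nonneg z₁ z₂) (posVariation_nonneg z₂ z₁)

lemma posVariation_le_toReal_univ (z₁ z₂ : Measure S) [IsFiniteMeasure z₁] :
    posVariation z₁ z₂ ≤ (z₁ univ).toReal :=
  posVariation_le fun F _ => by
    have := ENNReal.toReal_mono (measure_ne_top z₁ univ) (measure_mono (subset_univ F))
    linarith [ENNReal.toReal_nonneg (a := z₂ F)]

lemma tvDist_le_two (z₁ z₂ : Measure S) [IsProbabilityMeasure z₁] [IsProbabilityMeasure z₂] :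
    tvDist z₁ z₂ ≤ 2 := by
  have h₁ := posVariation_le_toReal_univ z₁ z₂
  have h₂ := posVariation_le_toReal_univ z₂ z₁
  simp only [measure_univ, ENNReal.toReal_one] at h₁ h₂
  rw [tvDist_eq_posVariation_add]
  linarith

lemma abs_toReal_univ_sub_le_tvDist (z₁ z₂ : Measure S) [IsFiniteMeasure z₁]
    [IsFiniteMeasure z₂] : |(z₁ univ).toReal - (z₂ univ).toReal| ≤ tvDist z₁ z₂ := by
  have h₁ := toReal_measure_sub_le_posVariation z₁ z₂ .univ
  have h₂ := toReal_measure_sub_le_posVariation z₂ z₁ .univ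
  rw [tvDist_eq_posVariation_add, abs_sub_le_iff]
  constructor <;> linarith [posVariation_nonneg z₁ z₂, posVariation_nonneg z₂ z₁]

lemma posVariation_le_add (z₁ z₂ z₃ : Measure S) [IsFiniteMeasure z₁] [IsFiniteMeasure z₂] :
    posVariation z₁ z₃ ≤ posVariation z₁ z₂ + posVariation z₂ z₃ :=
  posVariation_le fun _ hF => by
    linarith [toReal_measure_sub_le_posVariation z₁ z₂ hF,
      toReal_measure_sub_le_posVariation z₂ z₃ hF]

lemma tvDist_triangle (z₁ z₂ z₃ : Measure S) [IsFiniteMeasure z₁] [IsFiniteMeasure z₂]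
    [IsFiniteMeasure z₃] : tvDist z₁ z₃ ≤ tvDist z₁ z₂ + tvDist z₂ z₃ := by
  simp only [tvDist_eq_posVariation_add]
  linarith [posVariation_le_add z₁ z₂ z₃, posVariation_le_add z₃ z₂ z₁]

lemma posVariation_smul (c : ℝ≥0∞) (z₁ z₂ : Measure S) :
    posVariation (c • z₁) (c • z₂) = c.toReal * posVariation z₁ z₂ := by
  rw [posVariation, posVariation, ← smul_eq_mul, ← Real.sSup_smul_of_nonneg ENNReal.toReal_nonneg]
  congr 1
  ext d
  simp only [Measure.smul_apply, smul_eq_mul, ENNReal.toReal_mul, mem_ofPred_eq, mem_smul_set]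
  constructor
  · rintro ⟨F, hF, rfl⟩
    exact ⟨_, ⟨F, hF, rfl⟩, by ring⟩
  · rintro ⟨_, ⟨F, hF, rfl⟩, rfl⟩
    exact ⟨F, hF, by ring⟩

lemma tvDist_smul (c : ℝ≥0∞) (z₁ z₂ : Measure S) :
    tvDist (c • z₁) (c • z₂) = c.toReal * tvDist z₁ z₂ := by
  simp only [tvDist_eq_posVariation_add, posVariation_smul, mul_add]

lemma tvDist_smul_smul_le (a b : ℝ≥0∞) (ρ : Measure S) [IsProbabilityMeasure ρ] :
    tvDist (a • ρ) (b • ρ) ≤ |a.toReal - b.toReal| := by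
  have key : ∀ a b : ℝ≥0∞, posVariation (a • ρ) (b • ρ) ≤ max (a.toReal - b.toReal) 0 :=
    fun a b => posVariation_le fun F _ => by
      have h₁ : (ρ F).toReal ≤ 1 :=
        ENNReal.toReal_le_of_le_ofReal zero_le_one (by simp [prob_le_one])
      simp only [Measure.smul_apply, smul_eq_mul, ENNReal.toReal_mul, ← sub_mul]
      rcases le_total (a.toReal - b.toReal) 0 with h | h
      · exact (mul_nonpos_of_nonpos_of_nonneg h ENNReal.toReal_nonneg).trans (le_max_right _ _)
      · exact (mul_le_of_le_one_right h h₁).trans (le_max_left _ _)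
  rw [tvDist_eq_posVariation_add, ← max_zero_add_max_neg_zero_eq_abs_self, neg_sub]
  exact add_le_add (key a b) (key b a)

end TotalVariation

section Normalization

variable {S : Type*} [MeasurableSpace S]

lemma tvDist_normalize_mul_le (μ ν : Measure S) [IsFiniteMeasure μ] [IsFiniteMeasure ν]
    [NeZero μ] [NeZero ν] :
    tvDist ((μ univ)⁻¹ • μ) ((ν univ)⁻¹ • ν) * (ν univ).toReal ≤ 2 * tvDist μ ν := by
  set μ₁ := (μ univ)⁻¹ • μ
  set ν₁ := (ν univ)⁻¹ • ν
  have hμ : μ univ • μ₁ = μ := by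
    rw [smul_smul, ENNReal.mul_inv_cancel (NeZero.ne _) (measure_ne_top _ _), one_smul]
  have hν : ν univ • ν₁ = ν := by
    rw [smul_smul, ENNReal.mul_inv_cancel (NeZero.ne _) (measure_ne_top _ _), one_smul]
  have : IsFiniteMeasure (ν univ • μ₁) :=
    ⟨ENNReal.mul_lt_top (measure_lt_top _ _) (measure_lt_top _ _)⟩
  calc tvDist μ₁ ν₁ * (ν univ).toReal = tvDist (ν univ • μ₁) ν := by
        rw [mul_comm, ← tvDist_smul, hν]
    _ ≤ tvDist (ν univ • μ₁) (μ univ • μ₁) + tvDist μ ν := by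
        rw [hμ]; exact tvDist_triangle _ _ _
    _ ≤ |(ν univ).toReal - (μ univ).toReal| + tvDist μ ν := by
        gcongr; exact tvDist_smul_smul_le _ _ _
    _ ≤ 2 * tvDist μ ν := by
        rw [abs_sub_comm]; linarith [abs_toReal_univ_sub_le_tvDist μ ν]

noncomputable def normalizeOr (μ z : Measure S) : Measure S :=
  if 0 < μ univ then (μ univ)⁻¹ • μ else z

lemma normalizeOr_zero (z : Measure S) : normalizeOr 0 z = z := by
  simp [normalizeOr]

lemma normalizeOr_of_neZero (μ z : Measure S) [NeZero μ] :
    normalizeOr μ z = (μ univ)⁻¹ • μ :=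
  if_pos (Measure.measure_univ_pos.2 (NeZero.ne μ))

instance isProbabilityMeasure_normalizeOr (μ z : Measure S) [IsFiniteMeasure μ]
    [IsProbabilityMeasure z] :
    IsProbabilityMeasure (normalizeOr μ z) := by
  rcases eq_zero_or_neZero μ with rfl | _
  · rwa [normalizeOr_zero]
  · rw [normalizeOr_of_neZero]; infer_instance

lemma normalizeOr_absolutelyContinuous {μ z lam : Measure S} (hμ : μ ≪ lam) (hz : z ≪ lam) :
    normalizeOr μ z ≪ lam := by
  unfold normalizeOr
  split_ifs
  exacts [Measure.smul_absolutelyContinuous.trans hμ, hz]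

lemma tvDist_normalizeOr_mul_le (μ ν z₁ z₂ : Measure S) [IsFiniteMeasure μ] [IsFiniteMeasure ν]
    [IsProbabilityMeasure z₁] [IsProbabilityMeasure z₂] :
    tvDist (normalizeOr μ z₁) (normalizeOr ν z₂) * (ν univ).toReal ≤ 2 * tvDist μ ν := by
  rcases eq_zero_or_neZero ν with rfl | _
  · simpa using tvDist_nonneg μ 0
  rcases eq_zero_or_neZero μ with rfl | _
  · have hν := abs_toReal_univ_sub_le_tvDist 0 ν
    rw [Measure.coe_zero, Pi.zero_apply, ENNReal.toReal_zero, zero_sub, abs_neg,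
      abs_of_nonneg ENNReal.toReal_nonneg] at hν
    calc _ ≤ 2 * (ν univ).toReal :=
          mul_le_mul_of_nonneg_right (tvDist_le_two _ _) ENNReal.toReal_nonneg
      _ ≤ 2 * tvDist 0 ν := by gcongr
  · rw [normalizeOr_of_neZero, normalizeOr_of_neZero]
    exact tvDist_normalize_mul_le μ ν

end Normalization

lemma exists_forall_abs_sub_le {α : Type*} {K : Set α} {f : α → ℝ} {γ : ℝ}
    (h : ∀ z₁ ∈ K, ∀ z₂ ∈ K, |f z₁ - f z₂| ≤ 2 * γ) : ∃ c, ∀ z ∈ K, |f z - c| ≤ γ := by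
  rcases K.eq_empty_or_nonempty with rfl | ⟨z₀, hz₀⟩
  · simp
  have hbdd : BddAbove (f '' K) :=
    ⟨f z₀ + 2 * γ, forall_mem_image.2 fun z hz => by linarith [(abs_le.1 (h z hz z₀ hz₀)).2]⟩
  refine ⟨sSup (f '' K) - γ, fun z hz => abs_le.2 ⟨?_, ?_⟩⟩
  · have : sSup (f '' K) ≤ f z + 2 * γ :=
      csSup_le (Set.Nonempty.image f ⟨z₀, hz₀⟩) fun _ ⟨z', hz', he⟩ => by
        linarith [he ▸ (abs_le.1 (h z' hz' z hz)).2]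
    linarith
  · linarith [le_csSup hbdd (mem_image_of_mem f hz)]

section Estimate

variable {S : Type*} [MeasurableSpace S]

lemma abs_mul_mass_sub_le {K : Set (Measure S)} {u : Measure S → ℝ} {c γ : ℝ} (hγ : 0 ≤ γ)
    (hc : ∀ z ∈ K, |u z - c| ≤ γ)
    (hu : ∀ z₁ ∈ K, ∀ z₂ ∈ K, |u z₁ - u z₂| ≤ γ * tvDist z₁ z₂)
    {μ ν z₁ z₂ : Measure S} [IsFiniteMeasure μ] [IsFiniteMeasure ν]
    [IsProbabilityMeasure z₁] [IsProbabilityMeasure z₂]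
    (h₁ : normalizeOr μ z₁ ∈ K) (h₂ : normalizeOr ν z₂ ∈ K) :
    |u (normalizeOr μ z₁) * (μ univ).toReal - u (normalizeOr ν z₂) * (ν univ).toReal
        - c * ((μ univ).toReal - (ν univ).toReal)| ≤ 3 * γ * tvDist μ ν := by
  set a := (μ univ).toReal
  set b := (ν univ).toReal
  have hb : 0 ≤ b := ENNReal.toReal_nonneg
  have hmass : |a - b| ≤ tvDist μ ν := abs_toReal_univ_sub_le_tvDist μ ν
  have hnorm := tvDist_normalizeOr_mul_le μ ν z₁ z₂
  calc _ = |(u (normalizeOr μ z₁) - c) * (a - b)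
          + (u (normalizeOr μ z₁) - u (normalizeOr ν z₂)) * b| := by ring_nf
    _ ≤ γ * tvDist μ ν + γ * tvDist (normalizeOr μ z₁) (normalizeOr ν z₂) * b := by
        refine (abs_add_le _ _).trans (add_le_add ?_ ?_)
        · rw [abs_mul]; exact mul_le_mul (hc _ h₁) hmass (abs_nonneg _) hγ
        · rw [abs_mul, abs_of_nonneg hb]; exact mul_le_mul_of_nonneg_right (hu _ h₁ _ h₂) hb
    _ ≤ 3 * γ * tvDist μ ν := by
        rw [mul_assoc γ]; nlinarith [mul_le_mul_of_nonneg_left hnorm hγ]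

end Estimate

def ediff (a b : ℝ≥0∞) : ℝ≥0∞ := a - b + (b - a)

lemma ediff_le_add (a b : ℝ≥0∞) : ediff a b ≤ a + b :=
  add_le_add tsub_le_self tsub_le_self

lemma ediff_mul_right (a b : ℝ≥0∞) {c : ℝ≥0∞} (hc : c ≠ ∞) :
    ediff a b * c = ediff (a * c) (b * c) := by
  rw [ediff, ediff, add_mul, ENNReal.sub_mul fun _ _ => hc, ENNReal.sub_mul fun _ _ => hc]

section Densities

variable {S : Type*} [MeasurableSpace S]

@[fun_prop]
lemma Measurable.ediff {f g : S → ℝ≥0∞} (hf : Measurable f) (hg : Measurable g) :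
    Measurable fun s => ediff (f s) (g s) :=
  (hf.sub hg).add (hg.sub hf)

lemma lintegral_ediff (lam : Measure S) {f g : S → ℝ≥0∞} (hf : Measurable f) (hg : Measurable g) :
    ∫⁻ s, ediff (f s) (g s) ∂lam = ∫⁻ s, (f s - g s) ∂lam + ∫⁻ s, (g s - f s) ∂lam :=
  lintegral_add_left (hf.sub hg) _

lemma ediff_lintegral_le (lam : Measure S) {f g : S → ℝ≥0∞} (hf : Measurable f)
    (hg : Measurable g) :
    ediff (∫⁻ s, f s ∂lam) (∫⁻ s, g s ∂lam) ≤ ∫⁻ s, ediff (f s) (g s) ∂lam := by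
  rw [lintegral_ediff lam hf hg]
  exact add_le_add (lintegral_sub_le _ _ hg) (lintegral_sub_le _ _ hf)

lemma lintegral_ediff_ne_top (lam : Measure S) {f g : S → ℝ≥0∞} (hf : Measurable f)
    (hf' : ∫⁻ s, f s ∂lam ≠ ∞) (hg' : ∫⁻ s, g s ∂lam ≠ ∞) : ∫⁻ s, ediff (f s) (g s) ∂lam ≠ ∞ :=
  ne_top_of_le_ne_top (by rw [lintegral_add_left hf]; exact ENNReal.add_ne_top.2 ⟨hf', hg'⟩)
    (lintegral_mono fun s => ediff_le_add (f s) (g s))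

/-- The supremum is attained on `{g < f}`. -/
lemma posVariation_withDensity (lam : Measure S) {f g : S → ℝ≥0∞} (hf : Measurable f)
    (hg : Measurable g) (hf' : ∫⁻ s, f s ∂lam ≠ ∞) (hg' : ∫⁻ s, g s ∂lam ≠ ∞) :
    posVariation (lam.withDensity f) (lam.withDensity g) = (∫⁻ s, (f s - g s) ∂lam).toReal := by
  have : IsFiniteMeasure (lam.withDensity f) := isFiniteMeasure_withDensity hf'
  have hI : ∫⁻ s, (f s - g s) ∂lam ≠ ∞ :=
    ne_top_of_le_ne_top hf' (lintegral_mono fun s => tsub_le_self)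
  have hgF (F : Set S) : ∫⁻ s in F, g s ∂lam ≠ ∞ :=
    ne_top_of_le_ne_top hg' (setLIntegral_le_lintegral F g)
  apply le_antisymm
  · refine posVariation_le fun F hF => ?_
    have key : ∫⁻ s in F, f s ∂lam ≤ ∫⁻ s in F, g s ∂lam + ∫⁻ s, (f s - g s) ∂lam :=
      calc ∫⁻ s in F, f s ∂lam ≤ ∫⁻ s in F, (g s + (f s - g s)) ∂lam :=
            lintegral_mono fun s => le_add_tsub
        _ = ∫⁻ s in F, g s ∂lam + ∫⁻ s in F, (f s - g s) ∂lam := lintegral_add_left hg _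
        _ ≤ _ := add_le_add le_rfl (setLIntegral_le_lintegral F _)
    rw [withDensity_apply _ hF, withDensity_apply _ hF]
    have := ENNReal.toReal_mono (ENNReal.add_ne_top.2 ⟨hgF F, hI⟩) key
    rw [ENNReal.toReal_add (hgF F) hI] at this
    linarith
  · set F := {s | g s < f s}
    have hF : MeasurableSet F := measurableSet_lt hg hf
    have hsplit : ∫⁻ s in F, f s ∂lam = ∫⁻ s, (f s - g s) ∂lam + ∫⁻ s in F, g s ∂lam := by
      rw [← setLIntegral_eq_of_support_subset (s := F) fun s hs => tsub_pos_iff_lt.1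
          (pos_iff_ne_zero.2 hs), ← lintegral_add_right _ hg]
      exact setLIntegral_congr_fun hF fun s (hs : g s < f s) => (tsub_add_cancel_of_le hs.le).symm
    refine le_trans ?_ (toReal_measure_sub_le_posVariation _ _ hF)
    rw [withDensity_apply _ hF, withDensity_apply _ hF, hsplit, ENNReal.toReal_add hI (hgF F)]
    simp

lemma tvDist_withDensity (lam : Measure S) {f g : S → ℝ≥0∞} (hf : Measurable f)
    (hg : Measurable g) (hf' : ∫⁻ s, f s ∂lam ≠ ∞) (hg' : ∫⁻ s, g s ∂lam ≠ ∞) :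
    tvDist (lam.withDensity f) (lam.withDensity g) = (∫⁻ s, ediff (f s) (g s) ∂lam).toReal := by
  rw [tvDist_eq_posVariation_add, posVariation_withDensity lam hf hg hf' hg',
    posVariation_withDensity lam hg hf hg' hf', lintegral_ediff lam hf hg,
    ENNReal.toReal_add (ne_top_of_le_ne_top hf' (lintegral_mono fun s => tsub_le_self))
      (ne_top_of_le_ne_top hg' (lintegral_mono fun s => tsub_le_self))]

lemma tvDist_eq_lintegral_ediff_rnDeriv {lam : Measure S} [SigmaFinite lam] {x y : Measure S}
    [IsFiniteMeasure x] [IsFiniteMeasure y] (hx : x ≪ lam) (hy : y ≪ lam) :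
    tvDist x y = (∫⁻ s, ediff (x.rnDeriv lam s) (y.rnDeriv lam s) ∂lam).toReal := by
  conv_lhs =>
    rw [← Measure.withDensity_rnDeriv_eq x lam hx, ← Measure.withDensity_rnDeriv_eq y lam hy]
  exact tvDist_withDensity lam (Measure.measurable_rnDeriv x lam) (Measure.measurable_rnDeriv y lam)
    (Measure.lintegral_rnDeriv_lt_top x lam).ne (Measure.lintegral_rnDeriv_lt_top y lam).ne

end Densities

lemma abs_integral_le_mul_toReal_lintegral {α : Type*} [MeasurableSpace α] {μ : Measure α}
    {f : α → ℝ} {φ : α → ℝ≥0∞} {C : ℝ} (hφ : AEMeasurable φ μ) (hφ' : ∫⁻ a, φ a ∂μ ≠ ∞)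
    (h : ∀ᵐ a ∂μ, |f a| ≤ C * (φ a).toReal) :
    |∫ a, f a ∂μ| ≤ C * (∫⁻ a, φ a ∂μ).toReal := by
  rw [← integral_toReal hφ (ae_lt_top' hφ hφ'), ← integral_const_mul, ← Real.norm_eq_abs]
  exact norm_integral_le_of_norm_le ((integrable_toReal_of_lintegral_ne_top hφ hφ').const_mul C) h

lemma integral_sub_integral_eq_of_integral_eq {α : Type*} [MeasurableSpace α] {μ : Measure α}
    {f g p q : α → ℝ} (hf : Integrable f μ) (hg : Integrable g μ) (hp : Integrable p μ)
    (hq : Integrable q μ) (hpq : ∫ a, p a ∂μ = ∫ a, q a ∂μ) (c : ℝ) :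
    ∫ a, f a ∂μ - ∫ a, g a ∂μ = ∫ a, (f a - g a - c * (p a - q a)) ∂μ := by
  rw [integral_sub, integral_sub hf hg, integral_const_mul, integral_sub hp hq, hpq, sub_self,
    mul_zero, sub_zero]
  exacts [hf.sub hg, (hp.sub hq).const_mul c]

section Kernel

variable {S A : Type*} [MeasurableSpace S] [MeasurableSpace A] {lam : Measure S}
  {m : S → S → A → ℝ≥0}

/-- The set `K`. -/
def probMeasuresAC (lam : Measure S) : Set (Measure S) :=
  {z | IsProbabilityMeasure z ∧ z ≪ lam}

noncomputable def xMaDensity (m : S → S → A → ℝ≥0) (z : Measure S) (a : A) (t : S) : ℝ≥0∞ :=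
  ∫⁻ s, m s t a ∂z

noncomputable def xMaDist (lam : Measure S) (m : S → S → A → ℝ≥0) (x y : Measure S) (a : A) :
    ℝ≥0∞ :=
  ∫⁻ t, ediff (xMaDensity m x a t) (xMaDensity m y a t) ∂lam

lemma hmap_eq_normalizeOr (lam : Measure S) (m : S → S → A → ℝ≥0) (z : Measure S) (a : A) :
    hmap lam m z a = normalizeOr (xMa lam m z a) z := rfl

lemma measurable_xMaDensity (hm : Measurable fun p : S × S × A => m p.1 p.2.1 p.2.2)
    (z : Measure S) [SFinite z] : Measurable (Function.uncurry (xMaDensity m z)) :=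
  Measurable.lintegral_prod_right' (f := fun q : (A × S) × S => (m q.2 q.1.2 q.1.1 : ℝ≥0∞))
    (by fun_prop)

lemma measurable_xMaDist [SFinite lam] (hm : Measurable fun p : S × S × A => m p.1 p.2.1 p.2.2)
    (x y : Measure S) [SFinite x] [SFinite y] : Measurable (xMaDist lam m x y) :=
  ((measurable_xMaDensity hm x).ediff (measurable_xMaDensity hm y)).lintegral_prod_right'

lemma xMa_apply [SFinite lam] (hm : Measurable fun p : S × S × A => m p.1 p.2.1 p.2.2)
    (z : Measure S) (a : A) {F : Set S} (hF : MeasurableSet F) :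
    xMa lam m z a F = ∫⁻ s, ∫⁻ t in F, m s t a ∂lam ∂z := by
  have hκ : Measurable fun s => lam.withDensity fun t => (m s t a : ℝ≥0∞) := by
    refine Measure.measurable_of_measurable_coe _ fun G hG => ?_
    simp_rw [withDensity_apply _ hG]
    exact Measurable.lintegral_prod_right' (f := fun q : S × S => (m q.1 q.2 a : ℝ≥0∞))
      (by fun_prop)
  simp_rw [xMa, Measure.bind_apply hF hκ.aemeasurable, withDensity_apply _ hF]

lemma xMa_eq_withDensity [SFinite lam] (hm : Measurable fun p : S × S × A => m p.1 p.2.1 p.2.2)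
    (z : Measure S) [SFinite z] (a : A) :
    xMa lam m z a = lam.withDensity (xMaDensity m z a) := by
  ext F hF
  rw [xMa_apply hm z a hF, withDensity_apply _ hF]
  exact lintegral_lintegral_swap (by fun_prop)

lemma xMa_apply_univ [SFinite lam] (hm : Measurable fun p : S × S × A => m p.1 p.2.1 p.2.2)
    (z : Measure S) [SFinite z] (a : A) :
    xMa lam m z a univ = ∫⁻ t, xMaDensity m z a t ∂lam := by
  rw [xMa_eq_withDensity hm, withDensity_apply _ .univ, Measure.restrict_univ]

lemma measurable_xMa_apply_univ [SFinite lam]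
    (hm : Measurable fun p : S × S × A => m p.1 p.2.1 p.2.2) (z : Measure S) [SFinite z] :
    Measurable fun a => xMa lam m z a univ := by
  simp_rw [xMa_apply_univ hm]
  exact (measurable_xMaDensity hm z).lintegral_prod_right'

lemma hmap_mem_probMeasuresAC [SFinite lam]
    (hm : Measurable fun p : S × S × A => m p.1 p.2.1 p.2.2) {z : Measure S}
    (hz : z ∈ probMeasuresAC lam) {a : A} (ha : xMa lam m z a univ < ∞) :
    hmap lam m z a ∈ probMeasuresAC lam := by
  have := hz.1
  have : IsFiniteMeasure (xMa lam m z a) := ⟨ha⟩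
  have hac : xMa lam m z a ≪ lam := by
    rw [xMa_eq_withDensity hm]
    exact withDensity_absolutelyContinuous _ _
  rw [hmap_eq_normalizeOr]
  exact ⟨inferInstance, normalizeOr_absolutelyContinuous hac hz.2⟩

lemma tvDist_xMa [SFinite lam] (hm : Measurable fun p : S × S × A => m p.1 p.2.1 p.2.2)
    {x y : Measure S} [SFinite x] [SFinite y] {a : A} (hx : xMa lam m x a univ ≠ ∞)
    (hy : xMa lam m y a univ ≠ ∞) :
    tvDist (xMa lam m x a) (xMa lam m y a) = (xMaDist lam m x y a).toReal := by
  rw [xMa_apply_univ hm] at hx hy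
  rw [xMa_eq_withDensity hm, xMa_eq_withDensity hm]
  exact tvDist_withDensity lam ((measurable_xMaDensity hm x).of_uncurry_left)
    ((measurable_xMaDensity hm y).of_uncurry_left) hx hy

lemma xMaDensity_eq_lintegral_rnDeriv_mul [SigmaFinite lam]
    (hm : Measurable fun p : S × S × A => m p.1 p.2.1 p.2.2) {z : Measure S} [IsFiniteMeasure z]
    (hz : z ≪ lam) (a : A) (t : S) :
    xMaDensity m z a t = ∫⁻ s, z.rnDeriv lam s * m s t a ∂lam := by
  conv_lhs => rw [xMaDensity, ← Measure.withDensity_rnDeriv_eq z lam hz]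
  exact lintegral_withDensity_eq_lintegral_mul _ (Measure.measurable_rnDeriv z lam) (by fun_prop)

variable {τ : Measure A} [SFinite τ]

lemma lintegral_xMa_apply_univ [SFinite lam]
    (hm : Measurable fun p : S × S × A => m p.1 p.2.1 p.2.2)
    (hnorm : ∀ s : S, ∫⁻ t, ∫⁻ a, (m s t a : ℝ≥0∞) ∂τ ∂lam = 1) (z : Measure S) [SFinite z] :
    ∫⁻ a, xMa lam m z a univ ∂τ = z univ := by
  calc ∫⁻ a, xMa lam m z a univ ∂τ = ∫⁻ a, ∫⁻ s, ∫⁻ t, m s t a ∂lam ∂z ∂τ := by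
        simp_rw [xMa_apply hm z _ .univ, Measure.restrict_univ]
    _ = ∫⁻ s, ∫⁻ a, ∫⁻ t, m s t a ∂lam ∂τ ∂z :=
        lintegral_lintegral_swap (Measurable.lintegral_prod_right'
          (f := fun q : (A × S) × S => (m q.1.2 q.2 q.1.1 : ℝ≥0∞)) (by fun_prop)).aemeasurable
    _ = ∫⁻ s, ∫⁻ t, ∫⁻ a, m s t a ∂τ ∂lam ∂z :=
        lintegral_congr fun s => lintegral_lintegral_swap (by fun_prop)
    _ = z univ := by simp [hnorm]

lemma ae_xMa_apply_univ_lt_top [SFinite lam]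
    (hm : Measurable fun p : S × S × A => m p.1 p.2.1 p.2.2)
    (hnorm : ∀ s : S, ∫⁻ t, ∫⁻ a, (m s t a : ℝ≥0∞) ∂τ ∂lam = 1) (z : Measure S)
    [IsFiniteMeasure z] : ∀ᵐ a ∂τ, xMa lam m z a univ < ∞ :=
  ae_lt_top (measurable_xMa_apply_univ hm z)
    (lintegral_xMa_apply_univ hm hnorm z ▸ measure_ne_top z univ)

lemma integrable_toReal_xMa_apply_univ [SFinite lam]
    (hm : Measurable fun p : S × S × A => m p.1 p.2.1 p.2.2)
    (hnorm : ∀ s : S, ∫⁻ t, ∫⁻ a, (m s t a : ℝ≥0∞) ∂τ ∂lam = 1) (z : Measure S)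
    [IsFiniteMeasure z] : Integrable (fun a => (xMa lam m z a univ).toReal) τ :=
  integrable_toReal_of_lintegral_ne_top (measurable_xMa_apply_univ hm z).aemeasurable
    (lintegral_xMa_apply_univ hm hnorm z ▸ measure_ne_top z univ)

lemma integral_toReal_xMa_apply_univ [SFinite lam]
    (hm : Measurable fun p : S × S × A => m p.1 p.2.1 p.2.2)
    (hnorm : ∀ s : S, ∫⁻ t, ∫⁻ a, (m s t a : ℝ≥0∞) ∂τ ∂lam = 1) (z : Measure S)
    [IsFiniteMeasure z] : ∫ a, (xMa lam m z a univ).toReal ∂τ = (z univ).toReal := by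
  rw [integral_toReal (measurable_xMa_apply_univ hm z).aemeasurable
    (ae_xMa_apply_univ_lt_top hm hnorm z), lintegral_xMa_apply_univ hm hnorm z]

lemma lintegral_xMaDist_le [SigmaFinite lam]
    (hm : Measurable fun p : S × S × A => m p.1 p.2.1 p.2.2)
    (hnorm : ∀ s : S, ∫⁻ t, ∫⁻ a, (m s t a : ℝ≥0∞) ∂τ ∂lam = 1) {x y : Measure S}
    [IsFiniteMeasure x] [IsFiniteMeasure y] (hx : x ≪ lam) (hy : y ≪ lam) :
    ∫⁻ a, xMaDist lam m x y a ∂τ ≤ ∫⁻ s, ediff (x.rnDeriv lam s) (y.rnDeriv lam s) ∂lam := by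
  set w := fun s => ediff (x.rnDeriv lam s) (y.rnDeriv lam s)
  have hw : Measurable w :=
    (Measure.measurable_rnDeriv x lam).ediff (Measure.measurable_rnDeriv y lam)
  calc _ ≤ ∫⁻ a, ∫⁻ t, xMaDensity m (lam.withDensity w) a t ∂lam ∂τ := by
        refine lintegral_mono fun a => lintegral_mono fun t => ?_
        rw [xMaDensity_eq_lintegral_rnDeriv_mul hm hx, xMaDensity_eq_lintegral_rnDeriv_mul hm hy,
          xMaDensity, lintegral_withDensity_eq_lintegral_mul _ hw (by fun_prop)]
        refine (ediff_lintegral_le lam (by fun_prop) (by fun_prop)).trans_eq ?_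
        simp_rw [Pi.mul_apply, w, ediff_mul_right _ _ ENNReal.coe_ne_top]
    _ = lam.withDensity w univ := by
        simp_rw [← xMa_apply_univ hm]
        exact lintegral_xMa_apply_univ hm hnorm _
    _ = ∫⁻ s, w s ∂lam := by rw [withDensity_apply _ .univ, Measure.restrict_univ]

lemma ae_abs_hmap_mul_mass_sub_le [SFinite lam]
    (hm : Measurable fun p : S × S × A => m p.1 p.2.1 p.2.2)
    (hnorm : ∀ s : S, ∫⁻ t, ∫⁻ a, (m s t a : ℝ≥0∞) ∂τ ∂lam = 1) {u : Measure S → ℝ} {c γ : ℝ}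
    (hγ : 0 ≤ γ) (hc : ∀ z ∈ probMeasuresAC lam, |u z - c| ≤ γ)
    (hu : ∀ z₁ ∈ probMeasuresAC lam, ∀ z₂ ∈ probMeasuresAC lam,
      |u z₁ - u z₂| ≤ γ * tvDist z₁ z₂)
    {x y : Measure S} (hx : x ∈ probMeasuresAC lam) (hy : y ∈ probMeasuresAC lam) :
    ∀ᵐ a ∂τ, |u (hmap lam m x a) * (xMa lam m x a univ).toReal
      - u (hmap lam m y a) * (xMa lam m y a univ).toReal
      - c * ((xMa lam m x a univ).toReal - (xMa lam m y a univ).toReal)|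
        ≤ 3 * γ * (xMaDist lam m x y a).toReal := by
  have := hx.1
  have := hy.1
  filter_upwards [ae_xMa_apply_univ_lt_top hm hnorm x, ae_xMa_apply_univ_lt_top hm hnorm y]
    with a hxa hya
  have : IsFiniteMeasure (xMa lam m x a) := ⟨hxa⟩
  have : IsFiniteMeasure (xMa lam m y a) := ⟨hya⟩
  rw [← tvDist_xMa hm hxa.ne hya.ne]
  exact abs_mul_mass_sub_le hγ hc hu (hmap_mem_probMeasuresAC hm hx hxa)
    (hmap_mem_probMeasuresAC hm hy hya)

end Kernel

theorem stmt_15_general {S A : Type*}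
    [MeasurableSpace S]
    [MeasurableSpace A]
    (lam : Measure S) [SigmaFinite lam] (τ : Measure A) [SigmaFinite τ]
    (m : S → S → A → ℝ≥0)
    (hm : Measurable fun p : S × S × A => m p.1 p.2.1 p.2.2)
    (hnorm : ∀ s : S, ∫⁻ t, ∫⁻ a, (m s t a : ℝ≥0∞) ∂τ ∂lam = 1)
    (u : Measure S → ℝ) (γu : ℝ) (hγu : 0 ≤ γu)
    (hlip : ∀ z₁ z₂ : Measure S, IsProbabilityMeasure z₁ → z₁ ≪ lam →
      IsProbabilityMeasure z₂ → z₂ ≪ lam → |u z₁ - u z₂| ≤ γu * tvDist z₁ z₂)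
    (hint : ∀ z : Measure S, IsProbabilityMeasure z → z ≪ lam →
      Integrable (fun a => u (hmap lam m z a) * (xMa lam m z a Set.univ).toReal) τ)
    (x y : Measure S)
    (hx : IsProbabilityMeasure x) (hxl : x ≪ lam)
    (hy : IsProbabilityMeasure y) (hyl : y ≪ lam) :
    |(∫ a, u (hmap lam m x a) * (xMa lam m x a Set.univ).toReal ∂τ) -
        ∫ a, u (hmap lam m y a) * (xMa lam m y a Set.univ).toReal ∂τ| ≤
      3 * γu * tvDist x y := by
  have hu : ∀ z₁ ∈ probMeasuresAC lam, ∀ z₂ ∈ probMeasuresAC lam,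
      |u z₁ - u z₂| ≤ γu * tvDist z₁ z₂ := fun z₁ h₁ z₂ h₂ => hlip z₁ z₂ h₁.1 h₁.2 h₂.1 h₂.2
  obtain ⟨c, hc⟩ := exists_forall_abs_sub_le (K := probMeasuresAC lam) fun z₁ h₁ z₂ h₂ => by
    have := h₁.1
    have := h₂.1
    nlinarith [hu z₁ h₁ z₂ h₂, tvDist_le_two z₁ z₂]
  have hmass : ∫ a, (xMa lam m x a univ).toReal ∂τ = ∫ a, (xMa lam m y a univ).toReal ∂τ := by
    rw [integral_toReal_xMa_apply_univ hm hnorm, integral_toReal_xMa_apply_univ hm hnorm,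
      measure_univ, measure_univ]
  have hle := lintegral_xMaDist_le hm hnorm hxl hyl
  have hfin := lintegral_ediff_ne_top lam (Measure.measurable_rnDeriv x lam)
    (Measure.lintegral_rnDeriv_lt_top x lam).ne (Measure.lintegral_rnDeriv_lt_top y lam).ne
  rw [integral_sub_integral_eq_of_integral_eq (hint x hx hxl) (hint y hy hyl)
    (integrable_toReal_xMa_apply_univ hm hnorm x) (integrable_toReal_xMa_apply_univ hm hnorm y)
    hmass c, tvDist_eq_lintegral_ediff_rnDeriv hxl hyl]
  calc _ ≤ 3 * γu * (∫⁻ a, xMaDist lam m x y a ∂τ).toReal :=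
        abs_integral_le_mul_toReal_lintegral (measurable_xMaDist hm x y).aemeasurable
          (ne_top_of_le_ne_top hfin hle)
          (ae_abs_hmap_mul_mass_sub_le hm hnorm hγu hc hu ⟨hx, hxl⟩ ⟨hy, hyl⟩)
    _ ≤ _ := by gcongr

/-- For a bounded Lipschitz `u : K → ℝ` (Lipschitz constant `γu` with
respect to `δ_TV`) whose transition integrand is integrable, the transition operator
`Tu(x) = ∫_A u(h(x,a)) ‖xM_a‖ τ(da)` is Lipschitz with constant at most `3γ(u)`:
`|Tu(x) − Tu(y)| ≤ 3γ(u) δ_TV(x,y)` for all `x, y ∈ K`. -/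
theorem stmt_15 {S A : Type*}
    [MetricSpace S] [CompleteSpace S] [TopologicalSpace.SeparableSpace S]
    [MeasurableSpace S] [BorelSpace S]
    [MetricSpace A] [CompleteSpace A] [TopologicalSpace.SeparableSpace A]
    [MeasurableSpace A] [BorelSpace A]
    (lam : Measure S) [SigmaFinite lam] (τ : Measure A) [SigmaFinite τ]
    (m : S → S → A → ℝ≥0)
    (hm : Measurable fun p : S × S × A => m p.1 p.2.1 p.2.2)
    (hnorm : ∀ s : S, ∫⁻ t, ∫⁻ a, (m s t a : ℝ≥0∞) ∂τ ∂lam = 1)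
    (u : Measure S → ℝ) (γu : ℝ) (hγu : 0 ≤ γu)
    (hbd : ∃ Cu : ℝ, ∀ z : Measure S, IsProbabilityMeasure z → z ≪ lam → |u z| ≤ Cu)
    (hlip : ∀ z₁ z₂ : Measure S, IsProbabilityMeasure z₁ → z₁ ≪ lam →
      IsProbabilityMeasure z₂ → z₂ ≪ lam → |u z₁ - u z₂| ≤ γu * tvDist z₁ z₂)
    (hint : ∀ z : Measure S, IsProbabilityMeasure z → z ≪ lam →
      Integrable (fun a => u (hmap lam m z a) * (xMa lam m z a Set.univ).toReal) τ)
    (x y : Measure S)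
    (hx : IsProbabilityMeasure x) (hxl : x ≪ lam)
    (hy : IsProbabilityMeasure y) (hyl : y ≪ lam) :
    |(∫ a, u (hmap lam m x a) * (xMa lam m x a Set.univ).toReal ∂τ) -
        ∫ a, u (hmap lam m y a) * (xMa lam m y a Set.univ).toReal ∂τ| ≤
      3 * γu * tvDist x y :=
  stmt_15_general lam τ m hm hnorm u γu hγu hlip hint x y hx hxl hy hyl
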